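/- arXiv:2012.11339 — 2 statements merged into one kernel-verified Lean document; each statement's English description precedes it below -/
import Mathlib

section
/- Let K₁ and K₂ be N×N real symmetric positive semidefinite matrices and set K = K₁ + K₂. For a real symmetric matrix S let λ_1(S) ≥ … ≥ λ_N(S) denote its eigenvalues in decreasing order (with multiplicity). Fix 1 ≤ M ≤ N and define C_single = N · ∑_{i=M+1}^{N} λ_i(K) and C_multi = N · ( ∑_{i=1}^{M} ( λ_i(K) − λ_i(K₁) − λ_i(K₂) ) + ∑_{j=M+1}^{N} λ_j(K) ). Then C_multi ≤ C_single. -/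
/-!
Let `b` be an orthonormal eigenbasis of `K = K₁ + K₂` and `S` the indices of the eigenvalues
`μ₀, …, μ_{M-1}`, so that `∑_{i<M} λᵢ(K) = ∑_{j∈S} ⟪b j, K₁ b j⟫ + ∑_{j∈S} ⟪b j, K₂ b j⟫`. Each of
the two sums is bounded by Ky Fan's inequality: expanding the `b j` in an eigenbasis of `Kₗ`
writes `∑_{j∈S} ⟪b j, Kₗ b j⟫` as `∑ₖ λₖ(Kₗ) tₖ` with weights `0 ≤ tₖ ≤ 1` (Bessel) summing
to `M` (Parseval), and such a weighted sum is at most the sum of the `M` largest `λₖ(Kₗ)`.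
Hence `∑_{i<M} (λᵢ(K) − λᵢ(K₁) − λᵢ(K₂)) ≤ 0`.
-/

open Finset
open scoped RealInnerProductSpace

theorem Antitone.sum_mul_le_sum_filter_lt {n M : ℕ} {lam t : Fin n → ℝ} (hlam : Antitone lam)
    (ht₀ : ∀ k, 0 ≤ t k) (ht₁ : ∀ k, t k ≤ 1) (hsum : ∑ k, t k = M) :
    ∑ k, lam k * t k ≤ ∑ k : Fin n with k.val < M, lam k := by
  have hMn : M ≤ n := by
    have : (M : ℝ) ≤ n := by
      simpa [← hsum] using sum_le_sum fun k (_ : k ∈ univ) => ht₁ k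
    exact_mod_cast this
  -- A value `p` separating the first `M` entries of `lam` from the others makes every term of
  -- `∑ lam t - ∑_{k<M} lam` at most the matching term of `p (∑ t - M) = 0`.
  obtain ⟨p, hp_top, hp_rest⟩ : ∃ p, (∀ k : Fin n, k.val < M → p ≤ lam k) ∧
      ∀ k : Fin n, ¬ k.val < M → lam k ≤ p := by
    by_cases h : M < n
    · exact ⟨lam ⟨M, h⟩, fun k hk => hlam (Fin.mk_le_of_le_val hk.le),
        fun k hk => hlam (Fin.le_def.2 (not_lt.1 hk))⟩
    · obtain ⟨p, hp⟩ := (Set.finite_range lam).bddBelow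
      exact ⟨p, fun k _ => hp ⟨k, rfl⟩, fun k hk => absurd (k.isLt.trans_le (not_lt.1 h)) hk⟩
  have hcard : #{k : Fin n | k.val < M} = M := by
    simp [Fin.card_filter_val_lt, hMn]
  calc ∑ k, lam k * t k
      = ∑ k : Fin n with k.val < M, lam k * t k + ∑ k : Fin n with ¬ k.val < M, lam k * t k :=
        (sum_filter_add_sum_filter_not _ _ _).symm
    _ ≤ ∑ k : Fin n with k.val < M, (lam k + p * (t k - 1)) +
          ∑ k : Fin n with ¬ k.val < M, p * t k := by
        refine add_le_add (sum_le_sum fun k hk => ?_) (sum_le_sum fun k hk => ?_)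
        · nlinarith [hp_top k (mem_filter.1 hk).2, ht₁ k]
        · nlinarith [hp_rest k (mem_filter.1 hk).2, ht₀ k]
    _ = ∑ k : Fin n with k.val < M, lam k + p * (∑ k, t k - M) := by
        rw [← sum_filter_add_sum_filter_not univ (fun k : Fin n => k.val < M) t,
          sum_add_distrib, ← mul_sum, ← mul_sum, sum_sub_distrib, sum_const, hcard]
        simp only [nsmul_eq_mul, mul_one]
        ring
    _ = ∑ k : Fin n with k.val < M, lam k := by rw [hsum, sub_self, mul_zero, add_zero]

section EigenBasis

variable {E ι : Type*} [NormedAddCommGroup E] [InnerProductSpace ℝ E] [Fintype ι]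
  {T : E →ₗ[ℝ] E} {b : OrthonormalBasis ι ℝ E} {d : ι → ℝ}

theorem OrthonormalBasis.inner_apply_self_eq_sum (hT : ∀ j, T (b j) = d j • b j) (x : E) :
    ⟪x, T x⟫ = ∑ j, d j * ⟪b j, x⟫ ^ 2 := by
  have hTx : T x = ∑ j, (d j * ⟪b j, x⟫) • b j := by
    conv_lhs => rw [← b.sum_repr' x]
    simp only [map_sum, map_smul, hT, smul_smul, mul_comm]
  rw [hTx, inner_sum]
  refine sum_congr rfl fun j _ => ?_
  rw [inner_smul_right, real_inner_comm]
  ring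

/-- **Ky Fan's inequality**, with `lam` the eigenvalues `d` listed in decreasing order. -/
theorem OrthonormalBasis.sum_inner_apply_le_sum_filter_lt (hT : ∀ j, T (b j) = d j • b j)
    {n : ℕ} {lam : Fin n → ℝ} (hlam : Antitone lam) (σ : Fin n ≃ ι)
    (hσ : ∀ k, lam k = d (σ k)) {κ : Type*} {v : κ → E} (hv : Orthonormal ℝ v)
    (s : Finset κ) :
    ∑ i ∈ s, ⟪v i, T (v i)⟫ ≤ ∑ k : Fin n with k.val < #s, lam k := by
  set t : ι → ℝ := fun j => ∑ i ∈ s, ⟪b j, v i⟫ ^ 2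
  have hweights : ∑ i ∈ s, ⟪v i, T (v i)⟫ = ∑ k, lam k * t (σ k) := by
    simp only [b.inner_apply_self_eq_sum hT, t, mul_sum, hσ]
    rw [sum_comm, Equiv.sum_comp σ fun j => ∑ i ∈ s, d j * ⟪b j, v i⟫ ^ 2]
  rw [hweights]
  refine hlam.sum_mul_le_sum_filter_lt (fun k => sum_nonneg fun i _ => sq_nonneg _)
    (fun k => ?bessel) ?parseval
  case bessel =>
    simpa [t, real_inner_comm, b.orthonormal.1] using hv.sum_inner_products_le (b (σ k)) (s := s)
  case parseval =>
    rw [Equiv.sum_comp σ t, sum_comm]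
    simp [b.sum_sq_inner_right, hv.1]

end EigenBasis

theorem Matrix.IsHermitian.toEuclideanLin_eigenvectorBasis {n : Type*} [Fintype n]
    [DecidableEq n] {A : Matrix n n ℝ} (hA : A.IsHermitian) (j : n) :
    A.toEuclideanLin (hA.eigenvectorBasis j) = hA.eigenvalues j • hA.eigenvectorBasis j := by
  ext1
  simp [Matrix.toLpLin_apply, hA.mulVec_eigenvectorBasis]

theorem c_multi_le_c_single_general
    (N : ℕ) (K₁ K₂ : Matrix (Fin N) (Fin N) ℝ)
    (hK₁ : K₁.PosSemidef) (hK₂ : K₂.PosSemidef) (hK : (K₁ + K₂).IsHermitian)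
    (μ₁ μ₂ μ : Fin N → ℝ)
    (hμ₁ : Antitone μ₁) (hμ₂ : Antitone μ₂)
    (hμ₁e : ∃ σ : Equiv.Perm (Fin N), ∀ i, μ₁ i = hK₁.1.eigenvalues (σ i))
    (hμ₂e : ∃ σ : Equiv.Perm (Fin N), ∀ i, μ₂ i = hK₂.1.eigenvalues (σ i))
    (hμe : ∃ σ : Equiv.Perm (Fin N), ∀ i, μ i = hK.eigenvalues (σ i))
    (M : ℕ) (hMN : M ≤ N) :
    (N : ℝ) * (∑ i ∈ Finset.univ.filter (fun i : Fin N => (i : ℕ) < M),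
        (μ i - μ₁ i - μ₂ i) +
      ∑ j ∈ Finset.univ.filter (fun j : Fin N => M ≤ (j : ℕ)), μ j) ≤
    (N : ℝ) * ∑ j ∈ Finset.univ.filter (fun j : Fin N => M ≤ (j : ℕ)), μ j := by
  obtain ⟨σ₁, hσ₁⟩ := hμ₁e
  obtain ⟨σ₂, hσ₂⟩ := hμ₂e
  obtain ⟨σ, hσ⟩ := hμe
  set b := hK.eigenvectorBasis
  set S := ({i : Fin N | i.val < M} : Finset (Fin N)).map σ.toEmbedding
  have hS : #S = M := by simp [S, Fin.card_filter_val_lt, hMN]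
  have hb : ∀ j, ⟪b j, (K₁ + K₂).toEuclideanLin (b j)⟫ = hK.eigenvalues j := fun j => by
    rw [hK.toEuclideanLin_eigenvectorBasis, inner_smul_right, real_inner_self_eq_norm_sq,
      b.orthonormal.1 j, one_pow, mul_one]
  have hkyfan : ∑ i : Fin N with i.val < M, μ i ≤
      ∑ i : Fin N with i.val < M, μ₁ i + ∑ i : Fin N with i.val < M, μ₂ i := by
    calc ∑ i : Fin N with i.val < M, μ i
        = ∑ j ∈ S, ⟪b j, K₁.toEuclideanLin (b j)⟫ + ∑ j ∈ S, ⟪b j, K₂.toEuclideanLin (b j)⟫ := by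
          simp [S, ← hb, hσ, inner_add_right, sum_add_distrib]
      _ ≤ _ := by
          rw [← hS]
          exact add_le_add
            (hK₁.1.eigenvectorBasis.sum_inner_apply_le_sum_filter_lt
              hK₁.1.toEuclideanLin_eigenvectorBasis hμ₁ σ₁ hσ₁ b.orthonormal S)
            (hK₂.1.eigenvectorBasis.sum_inner_apply_le_sum_filter_lt
              hK₂.1.toEuclideanLin_eigenvectorBasis hμ₂ σ₂ hσ₂ b.orthonormal S)
  have htop : ∑ i : Fin N with i.val < M, (μ i - μ₁ i - μ₂ i) ≤ 0 := by
    simp only [sum_sub_distrib]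
    linarith
  exact mul_le_mul_of_nonneg_left (add_le_of_nonpos_left htop) N.cast_nonneg

/-- **Proposition 1 (second part).** For real symmetric positive semidefinite `N × N`
matrices `K₁`, `K₂` with `K = K₁ + K₂`, eigenvalues listed in decreasing order with
multiplicity (`μ₁`, `μ₂`, `μ` for `K₁`, `K₂`, `K`), and `1 ≤ M ≤ N`, the MultiSVGP bound
constant `C_multi = N(∑_{i≤M}(λ_i(K) − λ_i(K₁) − λ_i(K₂)) + ∑_{j>M} λ_j(K))` is at most
the SVGP bound constant `C_single = N ∑_{j>M} λ_j(K)`. -/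
theorem c_multi_le_c_single
    (N : ℕ) (K₁ K₂ : Matrix (Fin N) (Fin N) ℝ)
    (hK₁ : K₁.PosSemidef) (hK₂ : K₂.PosSemidef) (hK : (K₁ + K₂).IsHermitian)
    (μ₁ μ₂ μ : Fin N → ℝ)
    (hμ₁ : Antitone μ₁) (hμ₂ : Antitone μ₂) (hμ : Antitone μ)
    (hμ₁e : ∃ σ : Equiv.Perm (Fin N), ∀ i, μ₁ i = hK₁.1.eigenvalues (σ i))
    (hμ₂e : ∃ σ : Equiv.Perm (Fin N), ∀ i, μ₂ i = hK₂.1.eigenvalues (σ i))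
    (hμe : ∃ σ : Equiv.Perm (Fin N), ∀ i, μ i = hK.eigenvalues (σ i))
    (M : ℕ) (hM1 : 1 ≤ M) (hMN : M ≤ N) :
    (N : ℝ) * (∑ i ∈ Finset.univ.filter (fun i : Fin N => (i : ℕ) < M),
        (μ i - μ₁ i - μ₂ i) +
      ∑ j ∈ Finset.univ.filter (fun j : Fin N => M ≤ (j : ℕ)), μ j) ≤
    (N : ℝ) * ∑ j ∈ Finset.univ.filter (fun j : Fin N => M ≤ (j : ℕ)), μ j :=
  c_multi_le_c_single_general N K₁ K₂ hK₁ hK₂ hK μ₁ μ₂ μ hμ₁ hμ₂ hμ₁e hμ₂e hμe M hMN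
end

section
/- Let b > 0 and x > 0. Then ∫₀^∞ [ (1/φ)^{1/2} / Γ(1/2) · x^{−3/2} · exp(−1/(φ·x)) ] · [ (1/b²)^{1/2} / Γ(1/2) · φ^{−3/2} · exp(−1/(b²·φ)) ] dφ = b / ( π · √x · (x + b²) ). -/
/-!
Both densities are powers of `φ` times `exp (-const / φ)`, so their product is
`x^(-3/2) / (b π) · φ^(-2) · exp (-(1/x + 1/b²) / φ)`. The substitution `u = 1/φ` turns the
`φ`-integral into a Gamma integral, which equals `1 / (1/x + 1/b²) = x b² / (x + b²)`.
-/

open Real MeasureTheory Set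

theorem integral_rpow_neg_mul_exp_neg_div_Ioi {a r : ℝ} (ha : 0 < a) (hr : 0 < r) :
    ∫ t in Ioi (0 : ℝ), t ^ (-a - 1) * exp (-(r / t)) = (1 / r) ^ a * Gamma a := by
  rw [← integral_rpow_mul_exp_neg_mul_Ioi ha hr,
    ← integral_comp_rpow_Ioi (fun u => u ^ (a - 1) * exp (-(r * u))) (p := -1) (by norm_num)]
  refine setIntegral_congr_fun measurableSet_Ioi fun t (ht : 0 < t) => ?_
  have hpow : t ^ (-a - 1) = t ^ (-1 - 1 : ℝ) * (t ^ (-1 : ℝ)) ^ (a - 1) := by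
    rw [← rpow_mul ht.le, ← rpow_add ht]
    ring_nf
  simp only [hpow, rpow_neg_one, smul_eq_mul, abs_neg, abs_one, one_mul, div_eq_mul_inv]
  ring

theorem compound_integrand_eq {b x φ : ℝ} (hb : 0 < b) (hφ : 0 < φ) :
    ((1 / φ) ^ ((1 : ℝ) / 2) / Gamma (1 / 2) * x ^ (-(3 : ℝ) / 2) * exp (-1 / (φ * x))) *
        ((1 / b ^ 2) ^ ((1 : ℝ) / 2) / Gamma (1 / 2) * φ ^ (-(3 : ℝ) / 2) *
          exp (-1 / (b ^ 2 * φ)))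
      = x ^ (-(3 : ℝ) / 2) / (b * π) *
          (φ ^ (-1 - 1 : ℝ) * exp (-((1 / x + 1 / b ^ 2) / φ))) := by
  have hφ_pow : (1 / φ) ^ ((1 : ℝ) / 2) * φ ^ (-(3 : ℝ) / 2) = φ ^ (-1 - 1 : ℝ) := by
    rw [one_div, inv_rpow hφ.le, ← rpow_neg hφ.le, ← rpow_add hφ]
    norm_num
  have hb_pow : (1 / b ^ 2) ^ ((1 : ℝ) / 2) = 1 / b := by
    rw [← sqrt_eq_rpow, sqrt_div' _ (sq_nonneg b), sqrt_one, sqrt_sq hb.le]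
  have hexp : exp (-1 / (φ * x)) * exp (-1 / (b ^ 2 * φ))
      = exp (-((1 / x + 1 / b ^ 2) / φ)) := by
    rw [← exp_add]
    ring_nf
  have hGamma : Gamma (1 / 2) * Gamma (1 / 2) = π := by
    rw [Gamma_one_half_eq, mul_self_sqrt pi_pos.le]
  rw [← hφ_pow, ← hexp, hb_pow, ← hGamma]
  ring

open Real in
/-- **Inverse-Gamma compound marginal.** For `b > 0` and `x > 0`, integrating the product
of the `InverseGamma(1/2, φ⁻¹)` density in `x` and the `InverseGamma(1/2, b⁻²)` density
in `φ` over `φ ∈ (0, ∞)` gives the density `b / (π √x (x + b²))` of the square of a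
Half-Cauchy(b) random variable. -/
theorem inverse_gamma_compound_marginal (b x : ℝ) (hb : 0 < b) (hx : 0 < x) :
    ∫ φ in Set.Ioi (0 : ℝ),
      ((1 / φ) ^ ((1 : ℝ) / 2) / Real.Gamma (1 / 2) * x ^ (-(3 : ℝ) / 2) *
          Real.exp (-1 / (φ * x))) *
        ((1 / b ^ 2) ^ ((1 : ℝ) / 2) / Real.Gamma (1 / 2) * φ ^ (-(3 : ℝ) / 2) *
          Real.exp (-1 / (b ^ 2 * φ)))
      = b / (Real.pi * Real.sqrt x * (x + b ^ 2)) := by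
  have hc : 0 < 1 / x + 1 / b ^ 2 := by positivity
  rw [setIntegral_congr_fun measurableSet_Ioi fun φ (hφ : 0 < φ) => compound_integrand_eq hb hφ,
    integral_const_mul, integral_rpow_neg_mul_exp_neg_div_Ioi one_pos hc, rpow_one, Gamma_one]
  have hx_pow : x ^ (-(3 : ℝ) / 2) = (x * sqrt x)⁻¹ := by
    rw [neg_div, rpow_neg hx.le, show (3 : ℝ) / 2 = 1 + 1 / 2 by norm_num, rpow_add hx, rpow_one,
      ← sqrt_eq_rpow]
  have hsqrt : 0 < sqrt x := sqrt_pos.mpr hx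
  rw [hx_pow]
  field_simp
  ring
end
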